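/- arXiv:2308.10720 — 4 statements merged into one kernel-verified Lean document; each statement's English description precedes it below -/
import Mathlib

section
/- Let ψ : ℝ → ℝ be continuous. The linear span of the family of ridge functions {x ↦ ψ(a·x + b) : a, b ∈ ℝ} is dense in C(K) with respect to the uniform norm for every compact set K ⊆ ℝ if and only if ψ is not a polynomial. -/
/-!
Let `V` be the closure of the span of the ridges `x ↦ ψ (a * x + b)` in `C(K, ℝ)`. For smooth
`ψ`, differentiating `k` times in the direction `a` keeps us in `V` and gives
`x ↦ x ^ k * ψ⁽ᵏ⁾ (a * x + b)`; at `a = 0` this is a multiple of `x ^ k`, so `x ^ k ∈ V` unless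
`ψ⁽ᵏ⁾ ≡ 0`. A continuous `ψ` is first mollified: the ridges of `φ ⋆ ψ` are averages of ridges
of `ψ`, hence still in `V`. If some `x ^ k ∉ V`, every mollification is a polynomial of degree
`< k`, and so is their pointwise limit `ψ`. Otherwise `V` contains all polynomials and is
everything by Stone–Weierstrass. Conversely, the ridges of a polynomial of degree `n` span a
space of polynomials of degree `≤ n`, which is finite-dimensional, hence closed, and not all of
`C(K, ℝ)` for infinite `K`.
-/

open Polynomial Filter Topology MeasureTheory Set
open scoped ContDiff Convolution

lemma HasDerivAt.mem_of_forall_mem {𝕜 E : Type*} [NontriviallyNormedField 𝕜]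
    [NormedAddCommGroup E] [NormedSpace 𝕜 E] {V : Submodule 𝕜 E} (hV : IsClosed (V : Set E))
    {f : 𝕜 → E} {f' : E} {x : 𝕜} (hf : HasDerivAt f f' x) (hfV : ∀ t, f t ∈ V) : f' ∈ V :=
  hV.mem_of_tendsto (hasDerivAt_iff_tendsto_slope.mp hf) <| Eventually.of_forall fun t =>
    V.smul_mem _ (V.sub_mem (hfV t) (hfV x))

lemma Submodule.integral_mem_of_isClosed {X E : Type*} [MeasurableSpace X] {μ : Measure X}
    [NormedAddCommGroup E] [NormedSpace ℝ E] [CompleteSpace E] {V : Submodule ℝ E}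
    (hV : IsClosed (V : Set E)) {f : X → E} (hfV : ∀ t, f t ∈ V) : ∫ t, f t ∂μ ∈ V := by
  by_cases hf : Integrable f μ
  · have := hV
    rw [← Submodule.Quotient.mk_eq_zero, ← V.mkQ_apply, ← V.coe_mkQL,
      ← V.mkQL.integral_comp_comm hf]
    simp [(Submodule.Quotient.mk_eq_zero V).mpr (hfV _)]
  · rw [integral_undef hf]
    exact V.zero_mem

lemma Polynomial.toContinuousMapOnAlgHom_injective {R : Type*} [CommRing R] [IsDomain R]
    [TopologicalSpace R] [IsTopologicalRing R] {s : Set R} (hs : s.Infinite) :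
    Function.Injective (toContinuousMapOnAlgHom s) := by
  refine (injective_iff_map_eq_zero _).mpr fun p hp => p.eq_zero_of_infinite_isRoot ?_
  refine hs.mono fun x hx => ?_
  simpa using DFunLike.congr_fun hp ⟨x, hx⟩

lemma not_finiteDimensional_continuousMap {s : Set ℝ} (hs : s.Infinite) :
    ¬ FiniteDimensional ℝ C(s, ℝ) := fun _ =>
  Polynomial.not_finite <| Module.Finite.of_injective (toContinuousMapOnAlgHom s).toLinearMap
    (Polynomial.toContinuousMapOnAlgHom_injective hs)

lemma Submodule.eq_top_of_forall_pow_mem {K : Set ℝ} [CompactSpace K]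
    {V : Submodule ℝ C(K, ℝ)} (hV : IsClosed (V : Set C(K, ℝ)))
    (hX : ∀ k : ℕ, toContinuousMapOnAlgHom K X ^ k ∈ V) : V = ⊤ := by
  have hpoly : (polynomialFunctions K : Set C(K, ℝ)) ⊆ V := by
    change Subalgebra.toSubmodule (polynomialFunctions K) ≤ V
    rw [polynomialFunctions.eq_adjoin_X, Algebra.adjoin_eq_span, Submonoid.closure_singleton_eq,
      Submodule.span_le]
    rintro _ ⟨k, rfl⟩
    exact hX k
  have hSW := ContinuousMap.subalgebra_topologicalClosure_eq_top_of_separatesPoints _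
    (polynomialFunctions_separatesPoints K)
  refine eq_top_iff.mpr fun f _ => hV.closure_subset_iff.mpr hpoly ?_
  rw [← Subalgebra.topologicalClosure_coe, hSW]
  trivial

lemma eq_sum_of_iteratedDeriv_eq_zero {f : ℝ → ℝ} {k : ℕ} (hf : ContDiff ℝ k f)
    (h : ∀ x, iteratedDeriv k f x = 0) (x : ℝ) :
    f x = ∑ j ∈ Finset.range k, iteratedDeriv j f 0 / j.factorial * x ^ j := by
  cases k with
  | zero => simpa using h x
  | succ n =>
    rcases eq_or_ne x 0 with rfl | hx
    · simp [Finset.sum_range_succ']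
    obtain ⟨x', -, hx'⟩ := taylor_mean_remainder_lagrange_iteratedDeriv hx.symm hf.contDiffOn
    rw [h, zero_mul, zero_div, sub_eq_zero] at hx'
    rw [hx', taylor_within_apply]
    refine Finset.sum_congr rfl fun j hj => ?_
    rw [iteratedDerivWithin_eq_iteratedDeriv (uniqueDiffOn_uIcc hx.symm)
      (hf.contDiffAt.of_le (mod_cast (Finset.mem_range.mp hj).le)) left_mem_uIcc]
    simp only [sub_zero, smul_eq_mul]
    ring

noncomputable def degreeLTFunctions (k : ℕ) : Submodule ℝ (ℝ → ℝ) :=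
  (degreeLT ℝ k).map (LinearMap.pi fun x => leval x)

lemma isClosed_degreeLTFunctions (k : ℕ) : IsClosed (degreeLTFunctions k : Set (ℝ → ℝ)) :=
  have : FiniteDimensional ℝ (degreeLTFunctions k) := Module.Finite.map _ _
  Submodule.closed_of_finiteDimensional _

lemma mem_degreeLTFunctions_of_iteratedDeriv_eq_zero {f : ℝ → ℝ} {k : ℕ}
    (hf : ContDiff ℝ k f) (h : ∀ x, iteratedDeriv k f x = 0) : f ∈ degreeLTFunctions k := by
  refine ⟨∑ j : Fin k, C (iteratedDeriv j f 0 / (j : ℕ).factorial) * X ^ (j : ℕ),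
    mem_degreeLT.mpr (degree_sum_fin_lt _), funext fun x => ?_⟩
  simp [eq_sum_of_iteratedDeriv_eq_zero hf h x, Finset.sum_range]

def ridge (K : Set ℝ) (g : C(ℝ, ℝ)) (a b : ℝ) : C(K, ℝ) :=
  g.comp ⟨fun x => a * x + b, by fun_prop⟩

@[simp] lemma ridge_apply (K : Set ℝ) (g : C(ℝ, ℝ)) (a b : ℝ) (x : K) :
    ridge K g a b x = g (a * x + b) := rfl

lemma continuous_ridge (K : Set ℝ) (g : C(ℝ, ℝ)) :
    Continuous fun p : ℝ × ℝ => ridge K g p.1 p.2 :=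
  (ContinuousMap.curry ⟨fun q : (ℝ × ℝ) × K => g (q.1.1 * q.2 + q.1.2), by fun_prop⟩).continuous

lemma hasDerivAt_ridge (K : Set ℝ) [CompactSpace K] {g g' : C(ℝ, ℝ)}
    (hg : ∀ x, HasDerivAt g (g' x) x) (a b : ℝ) :
    HasDerivAt (fun a => ridge K g a b) (toContinuousMapOnAlgHom K X * ridge K g' a b) a := by
  set γ' : ℝ → C(K, ℝ) := fun s => toContinuousMapOnAlgHom K X * ridge K g' s b
  have hγ' : Continuous γ' :=
    continuous_const.mul ((continuous_ridge K g').comp (continuous_id.prodMk continuous_const))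
  -- Pointwise differentiability is not enough in the sup norm; the fundamental theorem of
  -- calculus for the continuous curve `γ'` is.
  have hFTC : (fun a => ridge K g a b) = fun a => ridge K g 0 b + ∫ s in 0..a, γ' s := by
    ext a x
    have hint : (∫ s in 0..a, γ' s) x = ∫ s in 0..a, γ' s x :=
      ((ContinuousMap.evalCLM ℝ x).intervalIntegral_comp_comm (hγ'.intervalIntegrable 0 a)).symm
    have hderiv : ∀ s, HasDerivAt (fun s => g (s * x + b)) (γ' s x) s := fun s => by
      have := (hg (s * x + b)).comp s ((hasDerivAt_mul_const (x : ℝ)).add_const b)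
      simpa [γ', mul_comm, Function.comp_def] using this
    rw [ContinuousMap.add_apply, hint, intervalIntegral.integral_eq_sub_of_hasDerivAt
      (fun s _ => hderiv s)
      (((ContinuousMap.evalCLM ℝ x).continuous.comp hγ').intervalIntegrable _ _)]
    simp
  rw [hFTC]
  exact (hγ'.integral_hasStrictDerivAt 0 a).hasDerivAt.const_add _

section ClosedSubmodule

variable {K : Set ℝ} [CompactSpace K] {V : Submodule ℝ C(K, ℝ)}

lemma pow_mul_ridge_iteratedDeriv_mem (hV : IsClosed (V : Set C(K, ℝ))) {f : C(ℝ, ℝ)}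
    (hf : ContDiff ℝ ∞ f) (hfV : ∀ a b, ridge K f a b ∈ V) (k : ℕ) {g : C(ℝ, ℝ)}
    (hg : ⇑g = iteratedDeriv k f) (a b : ℝ) :
    toContinuousMapOnAlgHom K X ^ k * ridge K g a b ∈ V := by
  induction k generalizing g a b with
  | zero =>
    obtain rfl : g = f := DFunLike.ext' hg
    simpa using hfV a b
  | succ k ih =>
    let gk : C(ℝ, ℝ) := ⟨iteratedDeriv k f, hf.continuous_iteratedDeriv k (mod_cast le_top)⟩
    have hgk : ∀ x, HasDerivAt gk (g x) x := fun x => by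
      rw [hg, iteratedDeriv_succ]
      exact (hf.differentiable_iteratedDeriv k (mod_cast ENat.natCast_lt_top k) x).hasDerivAt
    have hderiv := (hasDerivAt_ridge K hgk a b).const_mul (toContinuousMapOnAlgHom K X ^ k)
    rw [← mul_assoc, ← pow_succ] at hderiv
    exact hderiv.mem_of_forall_mem hV fun a => ih rfl a b

lemma pow_mem_of_iteratedDeriv_ne_zero (hV : IsClosed (V : Set C(K, ℝ))) {f : C(ℝ, ℝ)}
    (hf : ContDiff ℝ ∞ f) (hfV : ∀ a b, ridge K f a b ∈ V) {k : ℕ} {b : ℝ}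
    (hb : iteratedDeriv k f b ≠ 0) : toContinuousMapOnAlgHom K X ^ k ∈ V := by
  let g : C(ℝ, ℝ) := ⟨iteratedDeriv k f, hf.continuous_iteratedDeriv k (mod_cast le_top)⟩
  have hconst : ridge K g 0 b = algebraMap ℝ C(K, ℝ) (g b) := by ext; simp
  have hmem := pow_mul_ridge_iteratedDeriv_mem hV hf hfV k (g := g) rfl 0 b
  rw [hconst, ← Algebra.commutes, ← Algebra.smul_def] at hmem
  simpa [g, hb] using V.smul_mem (g b)⁻¹ hmem

lemma ridge_convolution_mem (hV : IsClosed (V : Set C(K, ℝ))) {ρ : ℝ → ℝ}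
    (hρ : Continuous ρ) (hρs : HasCompactSupport ρ) {ψ : C(ℝ, ℝ)}
    (hψV : ∀ a b, ridge K ψ a b ∈ V) {g : C(ℝ, ℝ)}
    (hg : ⇑g = ρ ⋆[ContinuousLinearMap.lsmul ℝ ℝ] ψ) (a b : ℝ) : ridge K g a b ∈ V := by
  set G : ℝ → C(K, ℝ) := fun t => ρ t • ridge K ψ a (b - t)
  have hG : Integrable G := by
    refine Continuous.integrable_of_hasCompactSupport ?_ hρs.smul_right
    exact hρ.smul ((continuous_ridge K ψ).comp
      (continuous_const.prodMk (continuous_const.sub continuous_id)))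
  have hgG : ridge K g a b = ∫ t, G t := by
    ext x
    rw [ContinuousMap.integral_apply hG, ridge_apply, hg, convolution_lsmul]
    congr 1 with t
    simp [G, add_sub_assoc]
  rw [hgG]
  exact Submodule.integral_mem_of_isClosed hV fun t => V.smul_mem _ (hψV a (b - t))

end ClosedSubmodule

lemma not_dense_span_ridge_polynomial {K : Set ℝ} (hK : K.Infinite) (p : ℝ[X]) :
    ¬ Dense (Submodule.span ℝ
      {g : C(K, ℝ) | ∃ a b : ℝ, ∀ x : K, g x = p.eval (a * x + b)} : Set C(K, ℝ)) := by
  set W := (degreeLT ℝ (p.natDegree + 1)).map (toContinuousMapOnAlgHom K).toLinearMap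
  have : FiniteDimensional ℝ W := Module.Finite.map _ _
  have hspan :
      Submodule.span ℝ {g : C(K, ℝ) | ∃ a b : ℝ, ∀ x : K, g x = p.eval (a * x + b)} ≤ W := by
    rw [Submodule.span_le]
    rintro g ⟨a, b, hg⟩
    refine ⟨p.comp (C a * X + C b), mem_degreeLT.mpr ?_, ContinuousMap.ext fun x => by simp [hg]⟩
    refine degree_le_natDegree.trans_lt (mod_cast Nat.lt_succ_of_le ?_)
    simpa using natDegree_comp_le.trans (Nat.mul_le_mul_left _ natDegree_linear_le)
  intro hdense
  have hW : W = ⊤ := eq_top_iff.mpr <|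
    (Submodule.dense_iff_topologicalClosure_eq_top.mp hdense).ge.trans
      (Submodule.topologicalClosure_minimal _ hspan (Submodule.closed_of_finiteDimensional W))
  exact not_finiteDimensional_continuousMap hK
    (Module.finite_def.mpr (hW ▸ Module.Finite.iff_fg.mp this))

lemma dense_span_ridge_of_not_polynomial {ψ : ℝ → ℝ} (hψ : Continuous ψ)
    (hnp : ¬ ∃ p : ℝ[X], ∀ x, ψ x = p.eval x) (K : Set ℝ) [CompactSpace K] :
    Dense (Submodule.span ℝ
      {g : C(K, ℝ) | ∃ a b : ℝ, ∀ x : K, g x = ψ (a * x + b)} : Set C(K, ℝ)) := by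
  set V := (Submodule.span ℝ
    {g : C(K, ℝ) | ∃ a b : ℝ, ∀ x : K, g x = ψ (a * x + b)}).topologicalClosure
  have hV : IsClosed (V : Set C(K, ℝ)) := Submodule.isClosed_topologicalClosure _
  have hψV : ∀ a b, ridge K ⟨ψ, hψ⟩ a b ∈ V := fun a b =>
    Submodule.le_topologicalClosure _ (Submodule.subset_span ⟨a, b, fun _ => rfl⟩)
  rw [Submodule.dense_iff_topologicalClosure_eq_top]
  refine Submodule.eq_top_of_forall_pow_mem hV fun k => ?_
  by_contra hk
  let φ : ℕ → ContDiffBump (0 : ℝ) := fun n =>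
    ⟨1 / (n + 1) / 2, 1 / (n + 1), by positivity, half_lt_self (by positivity)⟩
  have hφ : Tendsto (fun n => (φ n).rOut) atTop (𝓝 0) := tendsto_one_div_add_atTop_nhds_zero_nat
  let F : ℕ → ℝ → ℝ := fun n => (φ n).normed volume ⋆[ContinuousLinearMap.lsmul ℝ ℝ] ψ
  have hF : ∀ n, ContDiff ℝ ∞ (F n) := fun n =>
    (φ n).hasCompactSupport_normed.contDiff_convolution_left _ (φ n).contDiff_normed
      hψ.locallyIntegrable
  have hFV : ∀ n a b, ridge K ⟨F n, (hF n).continuous⟩ a b ∈ V := fun n =>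
    ridge_convolution_mem hV (φ n).continuous_normed (φ n).hasCompactSupport_normed hψV rfl
  have hFW : ∀ n, F n ∈ degreeLTFunctions k := fun n =>
    mem_degreeLTFunctions_of_iteratedDeriv_eq_zero ((hF n).of_le (mod_cast le_top)) fun _ =>
      by_contra fun hb => hk (pow_mem_of_iteratedDeriv_ne_zero hV (hF n) (hFV n) hb)
  obtain ⟨p, -, hp⟩ := (isClosed_degreeLTFunctions k).mem_of_tendsto
    (tendsto_pi_nhds.mpr fun x => ContDiffBump.convolution_tendsto_right_of_continuous hφ hψ x)
    (Eventually.of_forall hFW)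
  exact hnp ⟨p, fun x => (congrFun hp x).symm⟩

/-- Let ψ : ℝ → ℝ be continuous. The linear span of the family of ridge
functions {x ↦ ψ(a·x + b) : a, b ∈ ℝ} is dense in C(K) with respect to the uniform norm
for every compact set K ⊆ ℝ if and only if ψ is not a polynomial. -/
theorem stmt_0 (ψ : ℝ → ℝ) (hψ : Continuous ψ) :
    (∀ K : Set ℝ, IsCompact K →
      Dense (↑(Submodule.span ℝ
        {g : C(K, ℝ) | ∃ a b : ℝ, ∀ x : K, g x = ψ (a * ↑x + b)}) : Set C(K, ℝ))) ↔
    ¬ ∃ p : Polynomial ℝ, ∀ x : ℝ, ψ x = p.eval x := by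
  constructor
  · rintro hdense ⟨p, hp⟩
    obtain rfl : ψ = fun x => p.eval x := funext hp
    exact not_dense_span_ridge_polynomial (Icc_infinite zero_lt_one) p (hdense _ isCompact_Icc)
  · intro hnp K hK
    have := isCompact_iff_compactSpace.mp hK
    exact dense_span_ridge_of_not_polynomial hψ hnp K
end

section
/- Let σ(t) = 1/(1 + exp(−t)) be the logistic sigmoid, let x₁ < x₂ < ⋯ < x_M be distinct real numbers and let y₁, …, y_M ∈ ℝ be arbitrary target values. Then there exist internal weights a₁, …, a_M ∈ ℝ, biases b₁, …, b_M ∈ ℝ and external weights w₁, …, w_M ∈ ℝ such that Σ_{i=1}^{M} w_i σ(a_i x_j + b_i) = y_j for every j = 1, …, M; that is, a single-hidden-layer network with M sigmoid neurons exactly interpolates any M data points with distinct abscissae. -/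
/-!
Take all internal weights equal to a large `t` and put the `i`-th threshold at `xᵢ`, i.e.
`aᵢ = t`, `bᵢ = -t xᵢ`. The activation matrix `σ(t (xⱼ - xᵢ))` then tends, as `t → ∞`, to a
lower triangular matrix with diagonal `σ 0 = 1/2`, so it is invertible for some `t`, and the
external weights are obtained by solving the resulting linear system.
-/

open Filter Matrix Topology

section Interpolation

variable {M : ℕ} (σ : ℝ → ℝ) (x : Fin M → ℝ)

def activationMatrix (t : ℝ) : Matrix (Fin M) (Fin M) ℝ :=
  of fun j i => σ (t * (x j - x i))

def activationLimit (c : ℝ) : Matrix (Fin M) (Fin M) ℝ :=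
  of fun j i => if i < j then c else if i = j then σ 0 else 0

variable {σ x}

lemma det_activationLimit (c : ℝ) : (activationLimit σ c : Matrix (Fin M) (Fin M) ℝ).det =
    σ 0 ^ M := by
  rw [det_of_isLowerTriangular _ fun i j (hij : i < j) => by
    simp [activationLimit, hij.not_gt, hij.ne']]
  simp [activationLimit]

lemma tendsto_activationMatrix {c : ℝ} (hx : StrictMono x)
    (hbot : Tendsto σ atBot (𝓝 0)) (htop : Tendsto σ atTop (𝓝 c)) :
    Tendsto (activationMatrix σ x) atTop (𝓝 (activationLimit σ c)) := by
  refine tendsto_pi_nhds.2 fun j => tendsto_pi_nhds.2 fun i => ?_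
  rcases lt_trichotomy i j with h | rfl | h
  · have : Tendsto (fun t : ℝ => t * (x j - x i)) atTop atTop :=
      tendsto_id.atTop_mul_const (sub_pos.2 (hx h))
    simpa [activationMatrix, activationLimit, h, Function.comp_def] using htop.comp this
  · simp [activationMatrix, activationLimit]
  · have : Tendsto (fun t : ℝ => t * (x j - x i)) atTop atBot :=
      tendsto_id.atTop_mul_const_of_neg (sub_neg.2 (hx h))
    simpa [activationMatrix, activationLimit, h.not_gt, h.ne', Function.comp_def] using
      hbot.comp this

lemma exists_det_activationMatrix_ne_zero {c : ℝ} (hx : StrictMono x) (h0 : σ 0 ≠ 0)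
    (hbot : Tendsto σ atBot (𝓝 0)) (htop : Tendsto σ atTop (𝓝 c)) :
    ∃ t, (activationMatrix σ x t).det ≠ 0 := by
  have hdet : Tendsto (fun t => (activationMatrix σ x t).det) atTop (𝓝 (σ 0 ^ M)) := by
    rw [← det_activationLimit c]
    exact (continuous_id.matrix_det.tendsto _).comp (tendsto_activationMatrix hx hbot htop)
  exact (hdet.eventually_ne (pow_ne_zero M h0)).exists

theorem exists_network_interpolation {c : ℝ} (hx : StrictMono x) (h0 : σ 0 ≠ 0)
    (hbot : Tendsto σ atBot (𝓝 0)) (htop : Tendsto σ atTop (𝓝 c)) (y : Fin M → ℝ) :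
    ∃ a b w : Fin M → ℝ, ∀ j, ∑ i, w i * σ (a i * x j + b i) = y j := by
  obtain ⟨t, ht⟩ := exists_det_activationMatrix_ne_zero hx h0 hbot htop
  obtain ⟨w, hw⟩ := mulVec_surjective_iff_isUnit.2 ((isUnit_iff_isUnit_det _).2 ht.isUnit) y
  refine ⟨fun _ => t, fun i => -(t * x i), w, fun j => ?_⟩
  rw [← hw]
  simp only [mulVec, dotProduct, activationMatrix, of_apply, mul_sub, ← sub_eq_add_neg]
  exact Finset.sum_congr rfl fun i _ => mul_comm _ _

end Interpolation

/-- Let σ be the logistic sigmoid, x₁ < ⋯ < x_M distinct reals and y₁,…,y_M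
arbitrary target values. Then there exist internal weights aᵢ, biases bᵢ and external
weights wᵢ such that Σᵢ wᵢ σ(aᵢ xⱼ + bᵢ) = yⱼ for every j: a single-hidden-layer network
with M sigmoid neurons exactly interpolates any M data points with distinct abscissae. -/
theorem stmt_3 (M : ℕ) (x y : Fin M → ℝ) (hx : StrictMono x) :
    ∃ a b w : Fin M → ℝ, ∀ j : Fin M,
      ∑ i : Fin M, w i * (1 / (1 + Real.exp (-(a i * x j + b i)))) = y j := by
  simpa only [Real.sigmoid_def, one_div] using
    exists_network_interpolation hx (by simp [Real.sigmoid_zero]) Real.tendsto_sigmoid_atBot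
      Real.tendsto_sigmoid_atTop y
end

section
/- Let σ(t) = 1/(1 + exp(−t)) be the logistic sigmoid and let x₁ < x₂ < ⋯ < x_M be distinct real numbers. Then the set of parameter vectors (a₁,…,a_M, b₁,…,b_M) ∈ ℝ^M × ℝ^M for which the M × M collocation matrix S with entries S_{ji} = σ(a_i x_j + b_i) is singular (det S = 0) has Lebesgue measure zero in ℝ^{2M}. Consequently, if internal weights and biases are drawn from any probability distribution on ℝ^{2M} that is absolutely continuous with respect to Lebesgue measure, the interpolation system S·w = y is uniquely solvable with probability 1. -/
/-!
The determinant of the collocation matrix is a real-analytic function of the parameters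
`(a, b)`, and the zero set of a real-analytic function on a finite-dimensional real space that
does not vanish identically is Lebesgue-null: in one variable its zeros are isolated, and in
`ℝ × ℝⁿ` Fubini reduces to the slices `{t} × ℝⁿ`, and the function vanishes identically on
such a slice only for `t` in a null set. So it suffices to exhibit one nonsingular collocation
matrix. With `aᵢ = a` and `bᵢ = -a xᵢ` the entries are `σ(a (xⱼ - xᵢ))`, and as `a → ∞` the
matrix tends to a lower triangular one with diagonal `σ 0 = 1/2`. Finally a nonsingular `S`
makes `S w = y` uniquely solvable, and an absolutely continuous probability measure does not
charge the null singular set.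
-/

open MeasureTheory Matrix Filter Topology Set Real

theorem AnalyticOnNhd.measure_setOf_eq_zero_of_ne {μ : Measure ℝ} [NullSingletonClass μ]
    {f : ℝ → ℝ} (hf : AnalyticOnNhd ℝ f univ) {t₀ : ℝ} (ht₀ : f t₀ ≠ 0) : μ {t | f t = 0} = 0 := by
  have hcodiscrete : ∀ᶠ t in codiscreteWithin univ, f t ≠ 0 :=
    (hf.eqOn_zero_or_eventually_ne_zero_of_preconnected isPreconnected_univ).resolve_left
      fun h => ht₀ (h (mem_univ t₀))
  have hae := ae_restrict_le_codiscreteWithin (μ := μ) MeasurableSet.univ hcodiscrete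
  rw [Measure.restrict_univ] at hae
  simpa using ae_iff.1 hae

section

variable {E : Type*} [NormedAddCommGroup E] [NormedSpace ℝ E] [MeasurableSpace E] [BorelSpace E]

theorem MeasureTheory.Measure.prod_setOf_eq_zero_of_analyticOnNhd (ν : Measure ℝ)
    [NullSingletonClass ν] (μ : Measure E) [SFinite μ]
    (hμ : ∀ g : E → ℝ, AnalyticOnNhd ℝ g univ → (∃ z, g z ≠ 0) → μ {z | g z = 0} = 0)
    {f : ℝ × E → ℝ} (hf : AnalyticOnNhd ℝ f univ) (hf₀ : ∃ p, f p ≠ 0) :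
    ν.prod μ {p | f p = 0} = 0 := by
  obtain ⟨⟨t₀, z₀⟩, h₀⟩ := hf₀
  have hmeas : MeasurableSet {p | f p = 0} :=
    measurableSet_eq_fun (continuousOn_univ.1 hf.continuousOn).measurable measurable_const
  rw [Measure.measure_prod_null hmeas]
  have hslice : ν {t | f (t, z₀) = 0} = 0 := AnalyticOnNhd.measure_setOf_eq_zero_of_ne
    (hf.comp (analyticOnNhd_id.prod analyticOnNhd_const) (mapsTo_univ _ _)) h₀
  filter_upwards [measure_eq_zero_iff_ae_notMem.1 hslice] with t ht
  exact hμ _ (hf.comp (analyticOnNhd_const.prod analyticOnNhd_id) (mapsTo_univ _ _)) ⟨z₀, ht⟩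

theorem ContinuousLinearEquiv.addHaar_preimage_eq_zero {F : Type*} [NormedAddCommGroup F]
    [NormedSpace ℝ F] [MeasurableSpace F] [BorelSpace F] [FiniteDimensional ℝ F]
    (L : E ≃L[ℝ] F) (μ : Measure E) [μ.IsAddHaarMeasure] (ν : Measure F) [ν.IsAddHaarMeasure]
    {s : Set F} (hs : ν s = 0) : μ (L ⁻¹' s) = 0 := by
  have hac := Measure.absolutelyContinuous_isAddHaarMeasure (μ.map L) ν hs
  rwa [show μ.map L = μ.map L.toHomeomorph.toMeasurableEquiv from rfl,
    MeasurableEquiv.map_apply] at hac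

theorem volume_setOf_eq_zero_of_analyticOnNhd {n : ℕ} {f : (Fin n → ℝ) → ℝ}
    (hf : AnalyticOnNhd ℝ f univ) (hf₀ : ∃ z, f z ≠ 0) : volume {z | f z = 0} = 0 := by
  obtain ⟨z₀, hz₀⟩ := hf₀
  induction n with
  | zero =>
    convert measure_empty (μ := (volume : Measure (Fin 0 → ℝ)))
    exact eq_empty_of_forall_notMem fun z hz => hz₀ (Subsingleton.elim z z₀ ▸ hz)
  | succ n ih =>
    obtain ⟨L⟩ : Nonempty ((Fin (n + 1) → ℝ) ≃L[ℝ] ℝ × (Fin n → ℝ)) :=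
      FiniteDimensional.nonempty_continuousLinearEquiv_of_finrank_eq (by simp [add_comm])
    have hprod : (volume : Measure ℝ).prod (volume : Measure (Fin n → ℝ))
        {p | f (L.symm p) = 0} = 0 :=
      Measure.prod_setOf_eq_zero_of_analyticOnNhd volume volume
        (fun g hg ⟨z, hz⟩ => ih hg z hz)
        (hf.comp (L.symm.analyticOnNhd univ) (mapsTo_univ _ _)) ⟨L z₀, by simpa using hz₀⟩
    simpa using L.addHaar_preimage_eq_zero volume _ hprod

theorem AnalyticOnNhd.addHaar_setOf_eq_zero [FiniteDimensional ℝ E] (μ : Measure E)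
    [μ.IsAddHaarMeasure] {f : E → ℝ} (hf : AnalyticOnNhd ℝ f univ) (hf₀ : ∃ z, f z ≠ 0) :
    μ {z | f z = 0} = 0 := by
  obtain ⟨z₀, hz₀⟩ := hf₀
  obtain ⟨L⟩ : Nonempty (E ≃L[ℝ] (Fin (Module.finrank ℝ E) → ℝ)) :=
    FiniteDimensional.nonempty_continuousLinearEquiv_of_finrank_eq (by simp)
  simpa using L.addHaar_preimage_eq_zero μ volume <| volume_setOf_eq_zero_of_analyticOnNhd
    (hf.comp (L.symm.analyticOnNhd univ) (mapsTo_univ _ _)) ⟨L z₀, by simpa using hz₀⟩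

end

theorem AnalyticOnNhd.matrix_det {𝕜 E ι : Type*} [NontriviallyNormedField 𝕜]
    [NormedAddCommGroup E] [NormedSpace 𝕜 E] [Fintype ι] [DecidableEq ι]
    {A : E → Matrix ι ι 𝕜} {s : Set E}
    (hA : ∀ i j, AnalyticOnNhd 𝕜 (fun z => A z i j) s) :
    AnalyticOnNhd 𝕜 (fun z => (A z).det) s := by
  simp_rw [det_apply']
  exact Finset.analyticOnNhd_fun_sum _ fun σ _ =>
    analyticOnNhd_const.mul (Finset.analyticOnNhd_fun_prod _ fun i _ => hA _ _)

theorem Matrix.existsUnique_mulVec_eq {K ι : Type*} [Field K] [Fintype ι] [DecidableEq ι]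
    {A : Matrix ι ι K} (hA : A.det ≠ 0) (y : ι → K) : ∃! w, A *ᵥ w = y :=
  have hA : IsUnit A := (isUnit_iff_isUnit_det A).2 hA.isUnit
  Function.Bijective.existsUnique
    ⟨mulVec_injective_iff_isUnit.2 hA, mulVec_surjective_iff_isUnit.2 hA⟩ y

noncomputable def sigmoidCollocation {ι : Type*} (x a b : ι → ℝ) : Matrix ι ι ℝ :=
  of fun j i => sigmoid (a i * x j + b i)

theorem analyticOnNhd_det_sigmoidCollocation {ι : Type*} [Fintype ι] [DecidableEq ι]
    (x : ι → ℝ) :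
    AnalyticOnNhd ℝ (fun p : (ι → ℝ) × (ι → ℝ) => (sigmoidCollocation x p.1 p.2).det) univ := by
  refine AnalyticOnNhd.matrix_det fun j i => AnalyticOnNhd.sigmoid fun p _ => ?_
  have hproj := (ContinuousLinearMap.proj (R := ℝ) (φ := fun _ : ι => ℝ) i).analyticAt
  exact (((hproj _).comp analyticAt_fst).mul analyticAt_const).add ((hproj _).comp analyticAt_snd)

theorem tendsto_sigmoidCollocation_atTop {ι : Type*} [LinearOrder ι] {x : ι → ℝ}
    (hx : StrictMono x) :
    Tendsto (fun a : ℝ => sigmoidCollocation x (fun _ => a) fun i => -(a * x i)) atTop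
      (𝓝 (of fun j i => if i < j then 1 else if i = j then sigmoid 0 else 0)) := by
  refine tendsto_pi_nhds.2 fun j => tendsto_pi_nhds.2 fun i => ?_
  have hentry : ∀ a : ℝ, sigmoidCollocation x (fun _ => a) (fun i => -(a * x i)) j i
      = sigmoid (a * (x j - x i)) := fun a => by
    simp only [sigmoidCollocation, of_apply]; ring_nf
  simp only [hentry, of_apply]
  rcases lt_trichotomy i j with hij | rfl | hji
  · rw [if_pos hij]
    exact tendsto_sigmoid_atTop.comp (tendsto_id.atTop_mul_const (sub_pos.2 (hx hij)))
  · simp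
  · rw [if_neg hji.not_gt, if_neg hji.ne']
    exact tendsto_sigmoid_atBot.comp (tendsto_id.atTop_mul_const_of_neg (sub_neg.2 (hx hji)))

theorem exists_det_sigmoidCollocation_ne_zero {ι : Type*} [Fintype ι] [LinearOrder ι]
    {x : ι → ℝ} (hx : StrictMono x) : ∃ a b : ι → ℝ, (sigmoidCollocation x a b).det ≠ 0 := by
  set L : Matrix ι ι ℝ := of fun j i => if i < j then 1 else if i = j then sigmoid 0 else 0
  have hL : L.det ≠ 0 := by
    rw [det_of_isLowerTriangular L fun j i (hji : j < i) => by simp [L, hji.not_gt, hji.ne']]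
    simp [L]
  obtain ⟨a, ha⟩ := (((continuous_id.matrix_det).tendsto L).comp
    (tendsto_sigmoidCollocation_atTop hx)).eventually_ne hL |>.exists
  exact ⟨_, _, ha⟩

-- the instance `(volume.prod volume).IsAddHaarMeasure` lies beyond the default search size
set_option synthInstance.maxSize 200 in
theorem volume_setOf_det_sigmoidCollocation_eq_zero {ι : Type*} [Fintype ι] [LinearOrder ι]
    {x : ι → ℝ} (hx : StrictMono x) :
    volume {p : (ι → ℝ) × (ι → ℝ) | (sigmoidCollocation x p.1 p.2).det = 0} = 0 := by
  obtain ⟨a, b, hab⟩ := exists_det_sigmoidCollocation_ne_zero hx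
  exact (analyticOnNhd_det_sigmoidCollocation x).addHaar_setOf_eq_zero (volume.prod volume)
    ⟨(a, b), hab⟩

/-- Let σ be the logistic sigmoid and x₁ < ⋯ < x_M distinct reals. The set of
parameter vectors (a, b) ∈ ℝ^M × ℝ^M for which the M × M collocation matrix
S_{ji} = σ(aᵢ xⱼ + bᵢ) is singular has Lebesgue measure zero in ℝ^{2M}. Consequently, if
internal weights and biases are drawn from any probability distribution absolutely
continuous w.r.t. Lebesgue measure, the interpolation system S·w = y is uniquely solvable
with probability 1. -/
theorem stmt_4 (M : ℕ) (x : Fin M → ℝ) (hx : StrictMono x) :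
    volume {p : (Fin M → ℝ) × (Fin M → ℝ) |
      (Matrix.of fun j i : Fin M =>
        1 / (1 + Real.exp (-(p.1 i * x j + p.2 i)))).det = 0} = 0 ∧
    ∀ μ : Measure ((Fin M → ℝ) × (Fin M → ℝ)), IsProbabilityMeasure μ →
      μ ≪ volume →
      μ {p : (Fin M → ℝ) × (Fin M → ℝ) |
        ∀ y : Fin M → ℝ, ∃! w : Fin M → ℝ,
          (Matrix.of fun j i : Fin M =>
            1 / (1 + Real.exp (-(p.1 i * x j + p.2 i)))) *ᵥ w = y} = 1 := by
  have hS (p : (Fin M → ℝ) × (Fin M → ℝ)) : (of fun j i : Fin M =>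
      1 / (1 + Real.exp (-(p.1 i * x j + p.2 i)))) = sigmoidCollocation x p.1 p.2 := by
    ext; simp [sigmoidCollocation, sigmoid_def]
  simp only [hS]
  have hnull := volume_setOf_det_sigmoidCollocation_eq_zero hx
  refine ⟨hnull, fun μ _ hμ => le_antisymm prob_le_one ?_⟩
  have hZ := hμ hnull
  calc 1 = μ {p | (sigmoidCollocation x p.1 p.2).det = 0}ᶜ :=
        ((prob_compl_eq_one_iff₀ (.of_null hZ)).2 hZ).symm
    _ ≤ _ := measure_mono fun p hp => existsUnique_mulVec_eq hp
end

section
/- Let f(x) = cos(20x) on [−1,1] and let p_M be the Lagrange interpolating polynomial of f at the M Chebyshev nodes. Since f extends to an entire function on ℂ, the convergence is faster than any geometric rate: for every ρ > 1, ρ^M · sup_{x ∈ [−1,1]} |p_M(x) − f(x)| → 0 as M → ∞. -/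
open scoped Real

/-- The M Chebyshev nodes on [-1,1]: x_k = cos((2k-1)π/(2M)), k = 1,…,M
(indexed here by k = 0,…,M-1, so x_k = cos((2k+1)π/(2M))). -/
noncomputable def chebNodes (M : ℕ) : Fin M → ℝ :=
  fun k => Real.cos ((2 * (k : ℝ) + 1) * π / (2 * M))

/-- The Lagrange interpolating polynomial of f at the M Chebyshev nodes. -/
noncomputable def chebInterp (M : ℕ) (f : ℝ → ℝ) : Polynomial ℝ :=
  Lagrange.interpolate Finset.univ (chebNodes M) (fun k => f (chebNodes M k))

/-!
The classical interpolation error formula: if `p` interpolates `f` at `n` distinct nodes of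
`[a, b]`, then `f x - p x = f⁽ⁿ⁾(ξ) / n! * ∏ (x - xᵢ)` for some `ξ ∈ [a, b]`. Indeed, choosing
`c` so that `f - p - c ∏ (X - xᵢ)` also vanishes at `x`, this function has `n + 1` zeros, so by
`n`-fold Rolle its `n`-th derivative `f⁽ⁿ⁾ - n! c` vanishes somewhere. For `f = cos (20 ·)` and the
Chebyshev nodes, `|f⁽ᴹ⁾| ≤ 20 ^ M` and `|x - xᵢ| ≤ 2`, so the error is at most `40 ^ M / M!`, and
`(40 ρ) ^ M / M! → 0` for every `ρ`.
-/

open Polynomial Nat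

namespace Polynomial

theorem iteratedDeriv_eval {𝕜 : Type*} [NontriviallyNormedField 𝕜] (p : 𝕜[X]) (n : ℕ) :
    iteratedDeriv n (fun x => p.eval x) = fun x => (derivative^[n] p).eval x := by
  induction n with
  | zero => simp
  | succ n ih =>
    ext x
    rw [iteratedDeriv_succ, ih, Function.iterate_succ_apply', Polynomial.deriv]

theorem contDiff_eval {𝕜 : Type*} [NontriviallyNormedField 𝕜] (p : 𝕜[X]) (n : WithTop ℕ∞) :
    ContDiff 𝕜 n fun x => p.eval x :=
  p.contDiff_aeval n

theorem iterate_derivative_eq_C_of_natDegree_le {R : Type*} [Semiring R] {p : R[X]} {n : ℕ}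
    (hp : p.natDegree ≤ n) : derivative^[n] p = C ((n ! : R) * p.coeff n) := by
  have hdeg : (derivative^[n] p).natDegree = 0 := by
    have := natDegree_iterate_derivative p n
    omega
  rw [eq_C_of_natDegree_eq_zero hdeg, coeff_iterate_derivative, zero_add,
    Nat.descFactorial_self, nsmul_eq_mul]

end Polynomial

theorem exists_iteratedDeriv_eq_zero_of_strictMono {n : ℕ} {g : ℝ → ℝ} (hg : ContDiff ℝ n g)
    {z : Fin (n + 1) → ℝ} (hz : StrictMono z) (hzero : ∀ i, g (z i) = 0) :
    ∃ ξ ∈ Set.Icc (z 0) (z (Fin.last n)), iteratedDeriv n g ξ = 0 := by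
  induction n generalizing g with
  | zero => exact ⟨z 0, Set.left_mem_Icc.2 le_rfl, by simpa using hzero 0⟩
  | succ n ih =>
    have hRolle (i : Fin (n + 1)) : ∃ w ∈ Set.Ioo (z i.castSucc) (z i.succ), deriv g w = 0 :=
      exists_deriv_eq_zero (hz Fin.castSucc_lt_succ) hg.continuous.continuousOn
        (by rw [hzero, hzero])
    choose w hw hw_zero using hRolle
    have hw_mono : StrictMono w := fun i j hij =>
      calc w i < z i.succ := (hw i).2
        _ ≤ z j.castSucc := hz.monotone (Fin.succ_le_castSucc_iff.mpr hij)
        _ < w j := (hw j).1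
    obtain ⟨ξ, hξ, hξ_zero⟩ := ih (ContDiff.deriv' (by exact_mod_cast hg)) hw_mono hw_zero
    refine ⟨ξ, ⟨(hw 0).1.le.trans hξ.1, hξ.2.trans (hw (Fin.last n)).2.le⟩, ?_⟩
    rwa [iteratedDeriv_succ']

theorem exists_iteratedDeriv_eq_zero_of_card_eq {n : ℕ} {g : ℝ → ℝ} (hg : ContDiff ℝ n g)
    {a b : ℝ} {s : Finset ℝ} (hs : s.card = n + 1) (hsab : ↑s ⊆ Set.Icc a b)
    (hzero : ∀ y ∈ s, g y = 0) :
    ∃ ξ ∈ Set.Icc a b, iteratedDeriv n g ξ = 0 := by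
  set e := s.orderIsoOfFin hs
  obtain ⟨ξ, hξ, hξ_zero⟩ := exists_iteratedDeriv_eq_zero_of_strictMono hg
    (z := fun i => (e i : ℝ)) (fun i j hij => e.strictMono hij) (fun i => hzero _ (e i).2)
  exact ⟨ξ, ⟨(hsab (e 0).2).1.trans hξ.1, hξ.2.trans (hsab (e _).2).2⟩, hξ_zero⟩

namespace Lagrange

variable {ι : Type*} {s : Finset ι}

theorem iterate_derivative_interpolate_add_C_mul_nodal [DecidableEq ι] {F : Type*} [Field F]
    {v : ι → F} (hv : Set.InjOn v s) (r : ι → F) (c : F) :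
    derivative^[s.card] (interpolate s v r + C c * nodal s v) = C (s.card ! * c) := by
  have hp := degree_interpolate_lt r hv
  have hdeg : (interpolate s v r + C c * nodal s v).natDegree ≤ s.card := by
    refine natDegree_add_le_of_degree_le ?_ ((natDegree_C_mul_le _ _).trans natDegree_nodal.le)
    exact natDegree_le_iff_degree_le.mpr hp.le
  rw [iterate_derivative_eq_C_of_natDegree_le hdeg, coeff_add, coeff_eq_zero_of_degree_lt hp,
    coeff_C_mul, ← natDegree_nodal (v := v), nodal_monic.coeff_natDegree, zero_add, mul_one]

theorem exists_sub_eval_interpolate_eq [DecidableEq ι] {v : ι → ℝ} {f : ℝ → ℝ}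
    (hf : ContDiff ℝ s.card f) (hv : Set.InjOn v s) {a b x : ℝ} (hvab : ∀ i ∈ s, v i ∈ Set.Icc a b)
    (hx : x ∈ Set.Icc a b) :
    ∃ ξ ∈ Set.Icc a b, f x - (interpolate s v (fun i => f (v i))).eval x =
      iteratedDeriv s.card f ξ / s.card ! * (nodal s v).eval x := by
  set p := interpolate s v (fun i => f (v i)) with hp
  by_cases hnode : ∃ i ∈ s, v i = x
  · obtain ⟨i, hi, rfl⟩ := hnode
    refine ⟨v i, hx, ?_⟩
    rw [eval_interpolate_at_node _ hv hi, eval_nodal_at_node hi, sub_self, mul_zero]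
  push Not at hnode
  have hω : (nodal s v).eval x ≠ 0 := eval_nodal_not_at_node fun i hi => (hnode i hi).symm
  set c := (f x - p.eval x) / (nodal s v).eval x
  set Q := p + C c * nodal s v
  have hzero : ∀ y ∈ insert x (s.image v), f y - Q.eval y = 0 := by
    simp only [Finset.mem_insert, Finset.mem_image]
    rintro y (rfl | ⟨i, hi, rfl⟩)
    · simp [Q, c, hω]
    · rw [eval_add, eval_mul, eval_nodal_at_node hi, mul_zero, add_zero, hp,
        eval_interpolate_at_node _ hv hi, sub_self]
  have hcard : (insert x (s.image v)).card = s.card + 1 := by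
    rw [Finset.card_insert_of_notMem (by simpa using hnode), Finset.card_image_of_injOn hv]
  have hsub : ↑(insert x (s.image v)) ⊆ Set.Icc a b := by
    rw [Finset.coe_insert, Finset.coe_image, Set.insert_subset_iff, Set.image_subset_iff]
    exact ⟨hx, hvab⟩
  obtain ⟨ξ, hξ, hξ_zero⟩ := exists_iteratedDeriv_eq_zero_of_card_eq
    (hf.sub (Q.contDiff_eval _)) hcard hsub hzero
  have hderiv : iteratedDeriv s.card (fun t => f t - Q.eval t) ξ =
      iteratedDeriv s.card f ξ - s.card ! * c := by
    rw [← Pi.sub_def, iteratedDeriv_sub hf.contDiffAt (Q.contDiff_eval _).contDiffAt,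
      Q.iteratedDeriv_eval, iterate_derivative_interpolate_add_C_mul_nodal hv]
    simp only [eval_C]
  refine ⟨ξ, hξ, ?_⟩
  have hc : c = iteratedDeriv s.card f ξ / s.card ! := by
    rw [eq_div_iff (by positivity)]
    linarith
  rw [← hc]
  exact (div_mul_cancel₀ _ hω).symm

theorem abs_eval_nodal_le {v : ι → ℝ} {x d : ℝ} (h : ∀ i ∈ s, |x - v i| ≤ d) :
    |(nodal s v).eval x| ≤ d ^ s.card := by
  rw [eval_nodal, Finset.abs_prod, ← Finset.prod_const]
  exact Finset.prod_le_prod (fun _ _ => abs_nonneg _) h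

theorem abs_sub_eval_interpolate_le [DecidableEq ι] {v : ι → ℝ} {f : ℝ → ℝ}
    (hf : ContDiff ℝ s.card f) (hv : Set.InjOn v s) {a b x B : ℝ}
    (hvab : ∀ i ∈ s, v i ∈ Set.Icc a b) (hx : x ∈ Set.Icc a b)
    (hB : ∀ t ∈ Set.Icc a b, |iteratedDeriv s.card f t| ≤ B) :
    |f x - (interpolate s v fun i => f (v i)).eval x| ≤ B * (b - a) ^ s.card / s.card ! := by
  obtain ⟨ξ, hξ, heq⟩ := exists_sub_eval_interpolate_eq hf hv hvab hx
  have hnodal : |(nodal s v).eval x| ≤ (b - a) ^ s.card := abs_eval_nodal_le fun i hi =>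
    abs_sub_le_iff.2 ⟨by linarith [hx.2, (hvab i hi).1], by linarith [hx.1, (hvab i hi).2]⟩
  rw [heq, abs_mul, abs_div, Nat.abs_cast, div_mul_eq_mul_div]
  gcongr
  · exact (abs_nonneg _).trans (hB ξ hξ)
  · exact hB ξ hξ

end Lagrange

theorem chebNodes_mem_Icc (M : ℕ) (k : Fin M) : chebNodes M k ∈ Set.Icc (-1 : ℝ) 1 :=
  ⟨Real.neg_one_le_cos _, Real.cos_le_one _⟩

theorem chebNodes_injective (M : ℕ) : Function.Injective (chebNodes M) := by
  intro k l hkl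
  have hM : (0 : ℝ) < M := by exact_mod_cast k.pos
  have harg (k : Fin M) : (2 * (k : ℝ) + 1) * π / (2 * M) ∈ Set.Icc 0 π := by
    have hk : (k : ℝ) + 1 ≤ M := by exact_mod_cast k.2
    refine ⟨by positivity, ?_⟩
    rw [div_le_iff₀ (by positivity)]
    nlinarith [Real.pi_pos]
  have h := Real.injOn_cos (harg k) (harg l) hkl
  field_simp at h
  exact Fin.ext (by exact_mod_cast (by linarith : (k : ℝ) = l))

theorem abs_eval_chebInterp_sub_le {M : ℕ} {f : ℝ → ℝ} (hf : ContDiff ℝ M f) {B x : ℝ}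
    (hB : ∀ t ∈ Set.Icc (-1 : ℝ) 1, |iteratedDeriv M f t| ≤ B) (hx : x ∈ Set.Icc (-1 : ℝ) 1) :
    |(chebInterp M f).eval x - f x| ≤ B * 2 ^ M / M ! := by
  have h := Lagrange.abs_sub_eval_interpolate_le (s := Finset.univ) (v := chebNodes M)
    (by simpa using hf) (chebNodes_injective M).injOn (fun k _ => chebNodes_mem_Icc M k) hx
    (by simpa using hB)
  norm_num at h
  rwa [abs_sub_comm]

theorem abs_iteratedDeriv_cos_const_mul_le (c t : ℝ) (n : ℕ) :
    |iteratedDeriv n (fun t => Real.cos (c * t)) t| ≤ |c| ^ n := by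
  rw [iteratedDeriv_comp_const_mul Real.contDiff_cos, abs_mul, abs_pow]
  exact mul_le_of_le_one_right (by positivity) (Real.abs_iteratedDeriv_cos_le_one n _)

/-- Let f(x) = cos(20x) on [−1,1] and p_M its Lagrange interpolant at the M
Chebyshev nodes. Since f extends to an entire function on ℂ, the convergence is faster
than any geometric rate: for every ρ > 1,
ρ^M · sup_{x ∈ [−1,1]} |p_M(x) − f(x)| → 0 as M → ∞. -/
theorem stmt_12 :
    ∀ ρ : ℝ, 1 < ρ →
      Filter.Tendsto (fun M : ℕ =>
          ρ ^ M *
            ⨆ x : Set.Icc (-1 : ℝ) 1,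
              |(chebInterp M (fun t => Real.cos (20 * t))).eval (x : ℝ) -
                Real.cos (20 * (x : ℝ))|)
        Filter.atTop (nhds 0) := by
  intro ρ hρ
  have hsup (M : ℕ) : (⨆ x : Set.Icc (-1 : ℝ) 1,
      |(chebInterp M (fun t => Real.cos (20 * t))).eval (x : ℝ) - Real.cos (20 * (x : ℝ))|) ≤
        40 ^ M / M ! := by
    refine Real.iSup_le (fun x => ?_) (by positivity)
    have h := abs_eval_chebInterp_sub_le (Real.contDiff_cos.comp (contDiff_const.mul contDiff_id))
      (fun t _ => abs_iteratedDeriv_cos_const_mul_le 20 t M) x.2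
    rwa [abs_of_pos (by norm_num : (0 : ℝ) < 20), ← mul_pow, (by norm_num : (20 : ℝ) * 2 = 40)]
      at h
  have hρ_pos : 0 < ρ := one_pos.trans hρ
  refine squeeze_zero
    (fun M => mul_nonneg (by positivity) (Real.iSup_nonneg fun _ => abs_nonneg _))
    (fun M => ?_) (FloorSemiring.tendsto_pow_div_factorial_atTop (40 * ρ))
  calc _ ≤ ρ ^ M * (40 ^ M / M !) := mul_le_mul_of_nonneg_left (hsup M) (by positivity)
    _ = (40 * ρ) ^ M / M ! := by ring
end
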